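/- arXiv:1302.4506 — 5 statements merged into one kernel-verified Lean document; each statement's English description precedes it below -/
import Mathlib

section
/- Let n ≥ 1 and let x, y ∈ [0,∞)^n, and fix an integer r ≥ 1. Suppose that F_{k,r}(x) ≤ F_{k,r}(y) for all integers k with r ≤ k ≤ nr. Then ‖x‖_p ≤ ‖y‖_p for every real p with 0 ≤ p ≤ 1. -/
open scoped BigOperators

/-- The `p`-norm `((1/n) Σ xᵢ^p)^(1/p)` for `p ≠ 0`, and the geometric mean
`(Π xᵢ)^(1/n)` for `p = 0`. -/
noncomputable def pNorm {n : ℕ} (p : ℝ) (x : Fin n → ℝ) : ℝ :=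
  if p = 0 then (∏ i, x i) ^ ((n : ℝ)⁻¹)
  else ((n : ℝ)⁻¹ * ∑ i, x i ^ p) ^ p⁻¹

/-- `Fcoeff n r k x` is the coefficient of `t^k` in `Π_{i=1}^n P_r (x_i t)`, where
`P_r(s) = Σ_{j=0}^r s^j / j!` is the `r`-th Taylor polynomial of `e^s`. -/
noncomputable def Fcoeff (n r k : ℕ) (x : Fin n → ℝ) : ℝ :=
  Polynomial.coeff
    (∏ i, ∑ j ∈ Finset.range (r + 1),
      Polynomial.C ((x i) ^ j / (Nat.factorial j : ℝ)) * Polynomial.X ^ j) k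

/-!
The coefficients of `∏ P_r(xᵢ t)` of degree below `r` are `(∑ xᵢ)^k / k!`, so the hypothesis at
`k = r` gives `∑ xᵢ ≤ ∑ yᵢ` and hence the comparison of all coefficients; therefore
`∏ P_r(xᵢ t) ≤ ∏ P_r(yᵢ t)` for `t ≥ 0`. The top coefficient `k = nr` is `∏ xᵢ^r / (r!)^n`,
which gives the case of the geometric mean. For `0 < p < 1` the scaling identity
`∫₀^∞ log P_r(c t) t^(-p-1) dt = c^p ∫₀^∞ log P_r(s) s^(-p-1) ds`, whose right-hand side is finite
and positive, turns `∑ log P_r(xᵢ t) ≤ ∑ log P_r(yᵢ t)` into `∑ xᵢ^p ≤ ∑ yᵢ^p`.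
-/

open scoped Nat Polynomial
open Polynomial
open Finset.HasAntidiagonal (antidiagonal mem_antidiagonal)

namespace ExpTaylor

noncomputable def expTaylor (r : ℕ) (s : ℝ) : ℝ := ∑ j ∈ Finset.range (r + 1), s ^ j / j !

noncomputable def expTaylorPoly (r : ℕ) (c : ℝ) : ℝ[X] :=
  ∑ j ∈ Finset.range (r + 1), C (c ^ j / j !) * X ^ j

theorem sum_antidiagonal_pow_div_factorial {K : Type*} [Field K] [CharZero K] (u v : K)
    (k : ℕ) :
    ∑ q ∈ antidiagonal k, u ^ q.1 / q.1 ! * (v ^ q.2 / q.2 !) = (u + v) ^ k / k ! := by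
  rw [(Commute.all u v).add_pow', Finset.sum_div]
  refine Finset.sum_congr rfl fun q hq ↦ ?_
  rw [← mem_antidiagonal.mp hq, nsmul_eq_mul, Nat.cast_add_choose]
  have : ((q.1 + q.2)! : K) ≠ 0 := Nat.cast_ne_zero.mpr (Nat.factorial_ne_zero _)
  field_simp

theorem coeff_expTaylorPoly (r : ℕ) (c : ℝ) (k : ℕ) :
    (expTaylorPoly r c).coeff k = if k ≤ r then c ^ k / k ! else 0 := by
  simp [expTaylorPoly, finsetSum_coeff, coeff_X_pow]

theorem natDegree_expTaylorPoly_le (r : ℕ) (c : ℝ) : (expTaylorPoly r c).natDegree ≤ r :=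
  natDegree_le_iff_coeff_eq_zero.mpr fun k hk ↦ by
    rw [coeff_expTaylorPoly, if_neg (by exact_mod_cast hk.not_ge)]

theorem Fcoeff_eq_coeff_prod_expTaylorPoly (n r k : ℕ) (x : Fin n → ℝ) :
    Fcoeff n r k x = (∏ i, expTaylorPoly r (x i)).coeff k := rfl

theorem eval_expTaylorPoly (r : ℕ) (c t : ℝ) :
    (expTaylorPoly r c).eval t = expTaylor r (c * t) := by
  simp only [expTaylorPoly, expTaylor, eval_finsetSum, eval_mul, eval_C, eval_pow, eval_X, mul_pow]
  exact Finset.sum_congr rfl fun j _ ↦ by ring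

section Product

variable {ι : Type*} (r : ℕ) (x : ι → ℝ)

theorem natDegree_prod_expTaylorPoly_le (s : Finset ι) :
    (∏ i ∈ s, expTaylorPoly r (x i)).natDegree ≤ s.card * r :=
  (natDegree_prod_le _ _).trans <| by
    simpa using Finset.sum_le_sum fun i (_ : i ∈ s) ↦ natDegree_expTaylorPoly_le r (x i)

variable [DecidableEq ι]

/-- Below degree `r` the truncation is invisible, so the product behaves like
`∏ exp (xᵢ t) = exp ((∑ xᵢ) t)`. -/
theorem coeff_prod_expTaylorPoly_of_le (s : Finset ι) {k : ℕ} (hk : k ≤ r) :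
    (∏ i ∈ s, expTaylorPoly r (x i)).coeff k = (∑ i ∈ s, x i) ^ k / k ! := by
  induction s using Finset.induction generalizing k with
  | empty => cases k <;> simp [coeff_one]
  | insert a s ha ih =>
    rw [Finset.prod_insert ha, coeff_mul, Finset.sum_insert ha,
      ← sum_antidiagonal_pow_div_factorial]
    refine Finset.sum_congr rfl fun q hq ↦ ?_
    have hq : q.1 + q.2 = k := mem_antidiagonal.mp hq
    rw [coeff_expTaylorPoly, if_pos (by omega), ih (by omega)]

theorem coeff_prod_expTaylorPoly_card_mul (s : Finset ι) :
    (∏ i ∈ s, expTaylorPoly r (x i)).coeff (s.card * r) = ∏ i ∈ s, x i ^ r / r ! := by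
  induction s using Finset.induction with
  | empty => simp
  | insert a s ha ih =>
    rw [Finset.prod_insert ha, Finset.card_insert_of_notMem ha, add_one_mul, add_comm,
      coeff_mul_add_eq_of_natDegree_le (natDegree_expTaylorPoly_le r (x a))
        (natDegree_prod_expTaylorPoly_le r x s),
      coeff_expTaylorPoly, if_pos le_rfl, ih, Finset.prod_insert ha]

end Product

theorem _root_.Polynomial.eval_le_eval_of_coeff_le {R : Type*} [Semiring R] [PartialOrder R]
    [IsOrderedRing R] {P Q : R[X]} (h : ∀ k, P.coeff k ≤ Q.coeff k) {t : R} (ht : 0 ≤ t) :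
    P.eval t ≤ Q.eval t := by
  let N := max P.natDegree Q.natDegree + 1
  rw [eval_eq_sum_range' (n := N) (by omega), eval_eq_sum_range' (n := N) (by omega)]
  exact Finset.sum_le_sum fun k _ ↦ mul_le_mul_of_nonneg_right (h k) (pow_nonneg ht k)

section Elementary

variable {r : ℕ} {s : ℝ}

theorem expTaylor_zero (r : ℕ) : expTaylor r 0 = 1 := by
  simp [expTaylor, Finset.sum_range_succ']

theorem continuous_expTaylor (r : ℕ) : Continuous (expTaylor r) := by
  unfold expTaylor
  fun_prop

theorem one_le_expTaylor (hs : 0 ≤ s) : 1 ≤ expTaylor r s := by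
  simpa [expTaylor] using Finset.single_le_sum (f := fun j ↦ s ^ j / j !)
    (fun j _ ↦ by positivity) (Finset.mem_range.mpr r.succ_pos)

theorem expTaylor_pos (hs : 0 ≤ s) : 0 < expTaylor r s :=
  one_pos.trans_le (one_le_expTaylor hs)

theorem one_lt_expTaylor (hr : r ≠ 0) (hs : 0 < s) : 1 < expTaylor r s := by
  calc 1 < 1 + s := by linarith
    _ = ∑ j ∈ Finset.range 2, s ^ j / j ! := by simp [Finset.sum_range_succ]
    _ ≤ expTaylor r s := Finset.sum_le_sum_of_subset_of_nonneg
        (Finset.range_subset_range.mpr (by omega)) fun j _ _ ↦ by positivity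

theorem expTaylor_le_exp (hs : 0 ≤ s) : expTaylor r s ≤ Real.exp s :=
  Real.sum_le_exp_of_nonneg hs (r + 1)

theorem expTaylor_le_mul_pow (hs : 1 ≤ s) : expTaylor r s ≤ (r + 1) * s ^ r := by
  calc expTaylor r s ≤ ∑ _j ∈ Finset.range (r + 1), s ^ r :=
        Finset.sum_le_sum fun j hj ↦ (div_le_self (by positivity)
          (Nat.one_le_cast.mpr j.factorial_pos)).trans
          (pow_le_pow_right₀ hs (Nat.lt_succ_iff.mp (Finset.mem_range.mp hj)))
    _ = (r + 1) * s ^ r := by simp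

theorem log_expTaylor_le (hs : 0 ≤ s) : Real.log (expTaylor r s) ≤ s :=
  (Real.log_le_log (expTaylor_pos hs) (expTaylor_le_exp hs)).trans_eq (Real.log_exp s)

theorem log_expTaylor_le_mul_rpow {q : ℝ} (hq : 0 < q) (hs : 1 ≤ s) :
    Real.log (expTaylor r s) ≤ (Real.log (r + 1) + r / q) * s ^ q := by
  have hs0 : 0 < s := one_pos.trans_le hs
  have hsq : 1 ≤ s ^ q := Real.one_le_rpow hs hq.le
  have hlog : Real.log s ≤ s ^ q / q := Real.log_le_rpow_div hs0.le hq
  have hlogr : 0 ≤ Real.log (r + 1) := Real.log_nonneg (by linarith [r.cast_nonneg (α := ℝ)])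
  calc Real.log (expTaylor r s) ≤ Real.log ((r + 1) * s ^ r) :=
        Real.log_le_log (expTaylor_pos hs0.le) (expTaylor_le_mul_pow hs)
    _ = Real.log (r + 1) + r * Real.log s := by
        rw [Real.log_mul (by positivity) (by positivity), Real.log_pow]
    _ ≤ Real.log (r + 1) * s ^ q + r * (s ^ q / q) := by gcongr; nlinarith
    _ = (Real.log (r + 1) + r / q) * s ^ q := by ring

end Elementary

section Comparison

variable {ι : Type*} [Fintype ι] {r : ℕ} {x y : ι → ℝ}

theorem sum_log_expTaylor_le (hx : ∀ i, 0 ≤ x i) (hy : ∀ i, 0 ≤ y i)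
    (h : ∀ k, (∏ i, expTaylorPoly r (x i)).coeff k ≤ (∏ i, expTaylorPoly r (y i)).coeff k)
    {t : ℝ} (ht : 0 ≤ t) :
    ∑ i, Real.log (expTaylor r (x i * t)) ≤ ∑ i, Real.log (expTaylor r (y i * t)) := by
  have hprod := eval_le_eval_of_coeff_le h ht
  simp only [eval_prod, eval_expTaylorPoly] at hprod
  rw [← Real.log_prod fun i _ ↦ (expTaylor_pos (mul_nonneg (hx i) ht)).ne',
    ← Real.log_prod fun i _ ↦ (expTaylor_pos (mul_nonneg (hy i) ht)).ne']
  exact Real.log_le_log (Finset.prod_pos fun i _ ↦ expTaylor_pos (mul_nonneg (hx i) ht)) hprod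

variable [DecidableEq ι]

theorem sum_le_sum_of_coeff_le (hr : r ≠ 0) (hx : ∀ i, 0 ≤ x i) (hy : ∀ i, 0 ≤ y i)
    (h : (∏ i, expTaylorPoly r (x i)).coeff r ≤ (∏ i, expTaylorPoly r (y i)).coeff r) :
    ∑ i, x i ≤ ∑ i, y i := by
  rw [coeff_prod_expTaylorPoly_of_le r x _ le_rfl, coeff_prod_expTaylorPoly_of_le r y _ le_rfl,
    div_le_div_iff_of_pos_right (by positivity)] at h
  exact (pow_le_pow_iff_left₀ (Finset.sum_nonneg fun i _ ↦ hx i)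
    (Finset.sum_nonneg fun i _ ↦ hy i) hr).mp h

theorem prod_le_prod_of_coeff_le (hr : r ≠ 0) (hx : ∀ i, 0 ≤ x i) (hy : ∀ i, 0 ≤ y i)
    (h : (∏ i, expTaylorPoly r (x i)).coeff (Fintype.card ι * r)
      ≤ (∏ i, expTaylorPoly r (y i)).coeff (Fintype.card ι * r)) :
    ∏ i, x i ≤ ∏ i, y i := by
  rw [← Finset.card_univ, coeff_prod_expTaylorPoly_card_mul, coeff_prod_expTaylorPoly_card_mul,
    Finset.prod_div_distrib, Finset.prod_div_distrib, Finset.prod_pow, Finset.prod_pow,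
    div_le_div_iff_of_pos_right (by positivity)] at h
  exact (pow_le_pow_iff_left₀ (Finset.prod_nonneg fun i _ ↦ hx i)
    (Finset.prod_nonneg fun i _ ↦ hy i) hr).mp h

/-- The coefficients below `r` only see `∑ xᵢ`, and those above `card ι * r` vanish. -/
theorem coeff_prod_expTaylorPoly_le (hx : ∀ i, 0 ≤ x i) (hsum : ∑ i, x i ≤ ∑ i, y i)
    (h : ∀ k, r ≤ k → k ≤ Fintype.card ι * r →
      (∏ i, expTaylorPoly r (x i)).coeff k ≤ (∏ i, expTaylorPoly r (y i)).coeff k) (k : ℕ) :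
    (∏ i, expTaylorPoly r (x i)).coeff k ≤ (∏ i, expTaylorPoly r (y i)).coeff k := by
  rcases lt_or_ge k r with hkr | hrk
  · rw [coeff_prod_expTaylorPoly_of_le r x _ hkr.le, coeff_prod_expTaylorPoly_of_le r y _ hkr.le]
    gcongr
    exact Finset.sum_nonneg fun i _ ↦ hx i
  rcases le_or_gt k (Fintype.card ι * r) with hkn | hnk
  · exact h k hrk hkn
  · rw [coeff_eq_zero_of_natDegree_lt ((natDegree_prod_expTaylorPoly_le r x _).trans_lt hnk),
      coeff_eq_zero_of_natDegree_lt ((natDegree_prod_expTaylorPoly_le r y _).trans_lt hnk)]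

end Comparison

section Mellin

open MeasureTheory Set

variable {f : ℝ → ℝ} {p c : ℝ}

theorem rpow_neg_sub_one_eq_mul_rpow (p : ℝ) (hc : 0 < c) {t : ℝ} (ht : 0 ≤ t) :
    t ^ (-p - 1) = c ^ (p + 1) * (c * t) ^ (-p - 1) := by
  rw [Real.mul_rpow hc.le ht, ← mul_assoc, ← Real.rpow_add hc]
  simp

theorem integrableOn_comp_mul_mul_rpow (hf0 : f 0 = 0)
    (hf : IntegrableOn (fun s ↦ f s * s ^ (-p - 1)) (Ioi 0)) (hc : 0 ≤ c) :
    IntegrableOn (fun t ↦ f (c * t) * t ^ (-p - 1)) (Ioi 0) := by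
  rcases hc.eq_or_lt with rfl | hc
  · simp [hf0]
  have hscaled : IntegrableOn (fun t ↦ f (c * t) * (c * t) ^ (-p - 1)) (Ioi 0) :=
    (integrableOn_Ioi_comp_mul_left_iff (fun s ↦ f s * s ^ (-p - 1)) 0 hc).mpr
      (by simpa using hf)
  refine IntegrableOn.congr_fun (hscaled.const_mul (c ^ (p + 1))) (fun t ht ↦ ?_)
    measurableSet_Ioi
  rw [rpow_neg_sub_one_eq_mul_rpow p hc (le_of_lt ht)]
  ring

theorem setIntegral_comp_mul_mul_rpow (hf0 : f 0 = 0) (hp : p ≠ 0) (hc : 0 ≤ c) :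
    ∫ t in Ioi 0, f (c * t) * t ^ (-p - 1) = c ^ p * ∫ s in Ioi 0, f s * s ^ (-p - 1) := by
  rcases hc.eq_or_lt with rfl | hc
  · simp [hf0, Real.zero_rpow hp]
  calc ∫ t in Ioi 0, f (c * t) * t ^ (-p - 1)
      = ∫ t in Ioi 0, c ^ (p + 1) * (f (c * t) * (c * t) ^ (-p - 1)) := by
        refine setIntegral_congr_fun measurableSet_Ioi fun t ht ↦ ?_
        rw [rpow_neg_sub_one_eq_mul_rpow p hc (le_of_lt ht)]
        ring
    _ = c ^ p * ∫ s in Ioi 0, f s * s ^ (-p - 1) := by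
        rw [integral_const_mul, integral_comp_mul_left_Ioi (fun s ↦ f s * s ^ (-p - 1)) 0 hc,
          mul_zero, smul_eq_mul, ← mul_assoc, ← Real.rpow_neg_one, ← Real.rpow_add hc]
        ring_nf

theorem sum_rpow_le_of_sum_comp_mul_le {ι : Type*} [Fintype ι] (hp : p ≠ 0) (hf0 : f 0 = 0)
    (hf : IntegrableOn (fun s ↦ f s * s ^ (-p - 1)) (Ioi 0))
    (hfpos : 0 < ∫ s in Ioi 0, f s * s ^ (-p - 1)) {x y : ι → ℝ} (hx : ∀ i, 0 ≤ x i)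
    (hy : ∀ i, 0 ≤ y i) (h : ∀ t, 0 < t → ∑ i, f (x i * t) ≤ ∑ i, f (y i * t)) :
    ∑ i, x i ^ p ≤ ∑ i, y i ^ p := by
  have hint {z : ι → ℝ} (hz : ∀ i, 0 ≤ z i) (i : ι) :
      IntegrableOn (fun t ↦ f (z i * t) * t ^ (-p - 1)) (Ioi 0) :=
    integrableOn_comp_mul_mul_rpow hf0 hf (hz i)
  have hmellin {z : ι → ℝ} (hz : ∀ i, 0 ≤ z i) :
      (∑ i, z i ^ p) * ∫ s in Ioi 0, f s * s ^ (-p - 1)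
        = ∫ t in Ioi 0, (∑ i, f (z i * t)) * t ^ (-p - 1) := by
    simp only [Finset.sum_mul]
    rw [integral_finsetSum _ fun i _ ↦ hint hz i]
    exact Finset.sum_congr rfl fun i _ ↦ (setIntegral_comp_mul_mul_rpow hf0 hp (hz i)).symm
  refine le_of_mul_le_mul_right ?_ hfpos
  rw [hmellin hx, hmellin hy]
  refine setIntegral_mono_on ?_ ?_ measurableSet_Ioi fun t ht ↦ ?_
  · simp only [Finset.sum_mul]
    exact integrable_finsetSum _ fun i _ ↦ hint hx i
  · simp only [Finset.sum_mul]
    exact integrable_finsetSum _ fun i _ ↦ hint hy i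
  · exact mul_le_mul_of_nonneg_right (h t ht) (Real.rpow_nonneg (le_of_lt ht) _)

end Mellin

section LogExpTaylor

open MeasureTheory Set

variable {r : ℕ} {p : ℝ}

theorem log_expTaylor_nonneg {s : ℝ} (hs : 0 ≤ s) : 0 ≤ Real.log (expTaylor r s) :=
  Real.log_nonneg (one_le_expTaylor hs)

theorem integrableOn_log_expTaylor_mul_rpow (r : ℕ) (hp0 : 0 < p) (hp1 : p < 1) :
    IntegrableOn (fun s ↦ Real.log (expTaylor r s) * s ^ (-p - 1)) (Ioi 0) := by
  have hmeas : AEStronglyMeasurable (fun s ↦ Real.log (expTaylor r s) * s ^ (-p - 1)) :=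
    ((Real.measurable_log.comp (continuous_expTaylor r).measurable).mul
      (measurable_id.pow_const _)).aestronglyMeasurable
  rw [← Ioc_union_Ioi_eq_Ioi zero_le_one]
  refine IntegrableOn.union ?_ ?_
  · have hdom : IntegrableOn (fun s : ℝ ↦ s ^ (-p)) (Ioc 0 1) := by
      simpa [intervalIntegrable_iff, uIoc_of_le zero_le_one] using
        intervalIntegral.intervalIntegrable_rpow' (a := 0) (b := 1) (r := -p) (by linarith)
    refine hdom.mono' hmeas.restrict ?_
    filter_upwards [ae_restrict_mem measurableSet_Ioc] with s hs
    have hs0 : 0 < s := hs.1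
    rw [Real.norm_eq_abs, abs_of_nonneg (mul_nonneg (log_expTaylor_nonneg hs0.le) (by positivity))]
    calc Real.log (expTaylor r s) * s ^ (-p - 1) ≤ s * s ^ (-p - 1) := by
          gcongr
          exact log_expTaylor_le hs0.le
      _ = s ^ (-p) := by
          rw [← Real.rpow_one_add' hs0.le (by linarith)]
          ring_nf
  · set C := Real.log (r + 1) + r / (p / 2)
    have hdom : IntegrableOn (fun s : ℝ ↦ C * s ^ (-(p / 2) - 1)) (Ioi 1) :=
      Integrable.const_mul (integrableOn_Ioi_rpow_of_lt (by linarith) one_pos) C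
    refine hdom.mono' hmeas.restrict ?_
    filter_upwards [ae_restrict_mem measurableSet_Ioi] with s hs
    have hs0 : 0 < s := one_pos.trans hs
    rw [Real.norm_eq_abs, abs_of_nonneg (mul_nonneg (log_expTaylor_nonneg hs0.le) (by positivity))]
    calc Real.log (expTaylor r s) * s ^ (-p - 1) ≤ C * s ^ (p / 2) * s ^ (-p - 1) := by
          gcongr
          exact log_expTaylor_le_mul_rpow (by positivity) hs.le
      _ = C * s ^ (-(p / 2) - 1) := by
          rw [mul_assoc, ← Real.rpow_add hs0]
          ring_nf

theorem setIntegral_log_expTaylor_mul_rpow_pos (hr : r ≠ 0) (hp0 : 0 < p) (hp1 : p < 1) :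
    0 < ∫ s in Ioi 0, Real.log (expTaylor r s) * s ^ (-p - 1) := by
  rw [setIntegral_pos_iff_support_of_nonneg_ae ?_ (integrableOn_log_expTaylor_mul_rpow r hp0 hp1)]
  · have hsupp : Ioi 0 ⊆ Function.support fun s ↦ Real.log (expTaylor r s) * s ^ (-p - 1) :=
      fun s hs ↦ mul_ne_zero (Real.log_pos (one_lt_expTaylor hr hs)).ne'
        (Real.rpow_pos_of_pos hs _).ne'
    rw [inter_eq_right.mpr hsupp, Real.volume_Ioi]
    exact ENNReal.zero_lt_top
  · filter_upwards [ae_restrict_mem measurableSet_Ioi] with s hs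
    exact mul_nonneg (log_expTaylor_nonneg (le_of_lt hs)) (Real.rpow_nonneg (le_of_lt hs) _)

end LogExpTaylor

end ExpTaylor

open ExpTaylor

theorem stmt_0 (n : ℕ) (hn : 1 ≤ n) (x y : Fin n → ℝ)
    (hx : ∀ i, 0 ≤ x i) (hy : ∀ i, 0 ≤ y i) (r : ℕ) (hr : 1 ≤ r)
    (hF : ∀ k : ℕ, r ≤ k → k ≤ n * r → Fcoeff n r k x ≤ Fcoeff n r k y) :
    ∀ p : ℝ, 0 ≤ p → p ≤ 1 → pNorm p x ≤ pNorm p y := by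
  intro p hp0 hp1
  have hr0 : r ≠ 0 := by omega
  replace hF : ∀ k, r ≤ k → k ≤ Fintype.card (Fin n) * r →
      (∏ i, expTaylorPoly r (x i)).coeff k ≤ (∏ i, expTaylorPoly r (y i)).coeff k := by
    simpa only [Fintype.card_fin, Fcoeff_eq_coeff_prod_expTaylorPoly] using hF
  have hrn : r ≤ Fintype.card (Fin n) * r := Nat.le_mul_of_pos_left r (by simpa)
  have hsum : ∑ i, x i ≤ ∑ i, y i := sum_le_sum_of_coeff_le hr0 hx hy (hF r le_rfl hrn)
  rcases hp0.eq_or_lt with rfl | hp0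
  · simp only [pNorm, if_true]
    exact Real.rpow_le_rpow (Finset.prod_nonneg fun i _ ↦ hx i)
      (prod_le_prod_of_coeff_le hr0 hx hy (hF _ hrn le_rfl)) (by positivity)
  have hpow : ∑ i, x i ^ p ≤ ∑ i, y i ^ p := by
    rcases hp1.eq_or_lt with rfl | hp1
    · simpa using hsum
    exact sum_rpow_le_of_sum_comp_mul_le hp0.ne' (by simp [expTaylor_zero])
      (integrableOn_log_expTaylor_mul_rpow r hp0 hp1)
      (setIntegral_log_expTaylor_mul_rpow_pos hr0 hp0 hp1) hx hy
      fun t ht ↦ sum_log_expTaylor_le hx hy (coeff_prod_expTaylorPoly_le hx hsum hF) ht.le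
  simp only [pNorm, if_neg hp0.ne']
  have hxp : 0 ≤ ∑ i, x i ^ p := Finset.sum_nonneg fun i _ ↦ Real.rpow_nonneg (hx i) p
  gcongr
end

section
/- Let n ≥ 1 and let x, y ∈ [0,∞)^n, and fix an integer r ≥ 1. Suppose that F_{k,r}(x) ≤ F_{k,r}(y) for all integers k with r ≤ k ≤ nr, and that Σ_{i=1}^n x_i = Σ_{i=1}^n y_i. Then ‖x‖_p ≥ ‖y‖_p for every real p with 1 ≤ p ≤ r+1. -/
/-!
Let `P_r(u) = ∑_{j ≤ r} u^j / j!` and `h(u) = u - log P_r(u) = log (eᵘ / P_r(u))`.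
Then `h ≥ 0`, `h(u) = O(u^(r+1))` at `0` and `h(u) ≤ u`, so for `1 < p < r + 1` the
integral `c_p = ∫₀^∞ h(u) u^(-p-1) du` is finite and positive, and scaling gives
`∫₀^∞ h(a t) t^(-p-1) dt = c_p a^p` for `a ≥ 0`.

The coefficients of `∏ P_r(xᵢ t)` of degree `< r` are `(∑ xᵢ)^k / k!`, so the hypotheses
make `∏ P_r(xᵢ t) ≤ ∏ P_r(yᵢ t)` for `t ≥ 0`, which together with `∑ xᵢ = ∑ yᵢ` reads
`∑ h(yᵢ t) ≤ ∑ h(xᵢ t)`. Integrating against `t^(-p-1)` gives `∑ yᵢ^p ≤ ∑ xᵢ^p`; the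
endpoint `p = 1` is `∑ xᵢ = ∑ yᵢ`, and `p = r + 1` follows by continuity in `p`.
-/

open scoped BigOperators

open Finset Polynomial Real MeasureTheory
open scoped Nat

noncomputable def expTaylor (r : ℕ) (u : ℝ) : ℝ :=
  ∑ j ∈ range (r + 1), u ^ j / j !

noncomputable def expTaylorPoly (r : ℕ) (a : ℝ) : ℝ[X] :=
  ∑ j ∈ range (r + 1), C (a ^ j / j !) * X ^ j

theorem Polynomial.eval_le_eval_of_coeff_le_s1 {R : Type*} [Semiring R] [PartialOrder R]
    [IsOrderedRing R] {p q : R[X]} (h : ∀ k, p.coeff k ≤ q.coeff k) {t : R} (ht : 0 ≤ t) :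
    p.eval t ≤ q.eval t := by
  set N := max p.natDegree q.natDegree + 1
  rw [eval_eq_sum_range' (n := N) (by omega), eval_eq_sum_range' (n := N) (by omega)]
  exact sum_le_sum fun k _ => mul_le_mul_of_nonneg_right (h k) (pow_nonneg ht k)

theorem coeff_expTaylorPoly (r : ℕ) (a : ℝ) (m : ℕ) :
    (expTaylorPoly r a).coeff m = if m ≤ r then a ^ m / m ! else 0 := by
  simp only [expTaylorPoly, finsetSum_coeff, coeff_C_mul, coeff_X_pow, mul_ite, mul_one,
    mul_zero, sum_ite_eq, mem_range, Nat.lt_succ_iff]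

theorem eval_expTaylorPoly (r : ℕ) (a t : ℝ) :
    (expTaylorPoly r a).eval t = expTaylor r (a * t) := by
  simp [expTaylorPoly, expTaylor, eval_finsetSum, mul_pow, div_mul_eq_mul_div]

theorem natDegree_prod_expTaylorPoly_le {ι : Type*} (s : Finset ι) (r : ℕ) (a : ι → ℝ) :
    (∏ i ∈ s, expTaylorPoly r (a i)).natDegree ≤ #s * r := by
  refine (natDegree_prod_le _ _).trans ?_
  rw [← smul_eq_mul, ← sum_const]
  refine sum_le_sum fun i _ => natDegree_sum_le_of_forall_le _ _ fun j hj => ?_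
  exact natDegree_C_mul_X_pow_le _ _ |>.trans (Nat.lt_succ_iff.mp (mem_range.mp hj))

/-- Below the truncation order the product sees only the exponential series, and
`∏ exp (aᵢ t) = exp ((∑ aᵢ) t)`. -/
theorem coeff_prod_expTaylorPoly_of_le {ι : Type*} (s : Finset ι) {r k : ℕ} (hk : k ≤ r)
    (a : ι → ℝ) :
    (∏ i ∈ s, expTaylorPoly r (a i)).coeff k = (∑ i ∈ s, a i) ^ k / k ! := by
  induction s using Finset.cons_induction generalizing k with
  | empty => rcases k with _ | k <;> simp [coeff_one]
  | cons b s hb ih =>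
    rw [prod_cons, sum_cons, coeff_mul, Nat.sum_antidiagonal_eq_sum_range_succ_mk, add_pow,
      sum_div]
    refine sum_congr rfl fun m hm => ?_
    have hmk : m ≤ k := Nat.lt_succ_iff.mp (mem_range.mp hm)
    rw [coeff_expTaylorPoly, if_pos (hmk.trans hk), ih ((k.sub_le m).trans hk),
      Nat.choose_eq_factorial_div_factorial hmk,
      Nat.cast_div (Nat.factorial_mul_factorial_dvd_factorial hmk) (by positivity)]
    push_cast
    field_simp

theorem prod_expTaylor_le_of_Fcoeff_le {n r : ℕ} {x y : Fin n → ℝ}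
    (hF : ∀ k : ℕ, r ≤ k → k ≤ n * r → Fcoeff n r k x ≤ Fcoeff n r k y)
    (hsum : ∑ i, x i = ∑ i, y i) {t : ℝ} (ht : 0 ≤ t) :
    ∏ i, expTaylor r (x i * t) ≤ ∏ i, expTaylor r (y i * t) := by
  have hcoeff : ∀ k, (∏ i, expTaylorPoly r (x i)).coeff k ≤
      (∏ i, expTaylorPoly r (y i)).coeff k := by
    intro k
    rcases lt_or_ge k r with hkr | hrk
    · rw [coeff_prod_expTaylorPoly_of_le _ hkr.le, coeff_prod_expTaylorPoly_of_le _ hkr.le, hsum]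
    rcases le_or_gt k (n * r) with hkn | hnk
    · exact hF k hrk hkn
    · have hdeg (z : Fin n → ℝ) : (∏ i, expTaylorPoly r (z i)).natDegree < k :=
        (natDegree_prod_expTaylorPoly_le univ r z).trans_lt (by simpa using hnk)
      rw [coeff_eq_zero_of_natDegree_lt (hdeg x), coeff_eq_zero_of_natDegree_lt (hdeg y)]
  simpa only [eval_prod, eval_expTaylorPoly] using eval_le_eval_of_coeff_le_s1 hcoeff ht

theorem continuous_expTaylor (r : ℕ) : Continuous (expTaylor r) := by
  unfold expTaylor
  fun_prop

theorem expTaylor_zero (r : ℕ) : expTaylor r 0 = 1 := by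
  simp [expTaylor, sum_range_succ']

theorem one_le_expTaylor (r : ℕ) {u : ℝ} (hu : 0 ≤ u) : 1 ≤ expTaylor r u := by
  simpa [expTaylor] using single_le_sum (f := fun j => u ^ j / j !) (fun j _ => by positivity)
    (mem_range.mpr r.succ_pos)

theorem expTaylor_pos (r : ℕ) {u : ℝ} (hu : 0 ≤ u) : 0 < expTaylor r u :=
  one_pos.trans_le (one_le_expTaylor r hu)

theorem expTaylor_le_exp (r : ℕ) {u : ℝ} (hu : 0 ≤ u) : expTaylor r u ≤ exp u :=
  sum_le_exp_of_nonneg hu (r + 1)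

theorem expTaylor_lt_exp (r : ℕ) {u : ℝ} (hu : 0 < u) : expTaylor r u < exp u := by
  have h := sum_le_exp_of_nonneg hu.le (r + 2)
  rw [sum_range_succ] at h
  have : 0 < u ^ (r + 1) / (r + 1)! := by positivity
  exact lt_of_lt_of_le (lt_add_of_pos_right _ this) h

noncomputable def expTaylorGap (r : ℕ) (u : ℝ) : ℝ :=
  u - log (expTaylor r u)

theorem expTaylorGap_zero (r : ℕ) : expTaylorGap r 0 = 0 := by
  simp [expTaylorGap, expTaylor_zero]

theorem expTaylorGap_nonneg (r : ℕ) {u : ℝ} (hu : 0 ≤ u) : 0 ≤ expTaylorGap r u := by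
  have := log_le_log (expTaylor_pos r hu) (expTaylor_le_exp r hu)
  rw [log_exp] at this
  exact sub_nonneg.mpr this

theorem expTaylorGap_pos (r : ℕ) {u : ℝ} (hu : 0 < u) : 0 < expTaylorGap r u := by
  have := log_lt_log (expTaylor_pos r hu.le) (expTaylor_lt_exp r hu)
  rw [log_exp] at this
  exact sub_pos.mpr this

theorem expTaylorGap_le_self (r : ℕ) {u : ℝ} (hu : 0 ≤ u) : expTaylorGap r u ≤ u :=
  sub_le_self _ (log_nonneg (one_le_expTaylor r hu))

theorem exists_expTaylorGap_le_pow (r : ℕ) :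
    ∃ c, ∀ u, 0 ≤ u → u ≤ 1 → expTaylorGap r u ≤ c * u ^ (r + 1) := by
  refine ⟨(r + 2) / ((r + 1)! * (r + 1)), fun u hu hu1 => ?_⟩
  have hP := one_le_expTaylor r hu
  have hexp : exp u - expTaylor r u ≤ u ^ (r + 1) * ((r + 2) / ((r + 1)! * (r + 1))) := by
    have := (abs_le.mp (exp_bound (n := r + 1) (by rwa [abs_of_nonneg hu]) r.succ_pos)).2
    rw [abs_of_nonneg hu] at this
    exact_mod_cast this
  calc expTaylorGap r u = log (exp u / expTaylor r u) := by
        rw [log_div (exp_ne_zero u) (by positivity), log_exp, expTaylorGap]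
    _ ≤ exp u / expTaylor r u - 1 := log_le_sub_one_of_pos (by positivity)
    _ = (exp u - expTaylor r u) / expTaylor r u := by field_simp
    _ ≤ exp u - expTaylor r u := div_le_self (by linarith [expTaylor_le_exp r hu]) hP
    _ ≤ _ := by linarith

theorem continuousOn_expTaylorGap (r : ℕ) : ContinuousOn (expTaylorGap r) (Set.Ici 0) :=
  continuousOn_id.sub <|
    (continuous_expTaylor r).continuousOn.log fun _ hu => (expTaylor_pos r hu).ne'

theorem integrableOn_expTaylorGap_mul_rpow (r : ℕ) {p : ℝ} (hp1 : 1 < p) (hpr : p < r + 1) :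
    IntegrableOn (fun u => expTaylorGap r u * u ^ (-(p + 1))) (Set.Ioi 0) := by
  have hcont : ContinuousOn (fun u => expTaylorGap r u * u ^ (-(p + 1))) (Set.Ioi 0) :=
    ((continuousOn_expTaylorGap r).mono Set.Ioi_subset_Ici_self).mul
      (continuousOn_id.rpow_const fun u hu => Or.inl (ne_of_gt hu))
  have hnorm {u : ℝ} (hu : 0 < u) :
      ‖expTaylorGap r u * u ^ (-(p + 1))‖ = expTaylorGap r u * u ^ (-(p + 1)) :=
    norm_of_nonneg (mul_nonneg (expTaylorGap_nonneg r hu.le) (rpow_nonneg hu.le _))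
  obtain ⟨c, hc⟩ := exists_expTaylorGap_le_pow r
  rw [← Set.Ioc_union_Ioi_eq_Ioi zero_le_one, integrableOn_union,
    integrableOn_Ioc_iff_integrableOn_Ioo]
  constructor
  · refine Integrable.mono' (((intervalIntegral.integrableOn_Ioo_rpow_iff zero_lt_one).mpr
      (by linarith : -1 < (r : ℝ) - p)).const_mul c)
      ((hcont.mono Set.Ioo_subset_Ioi_self).aestronglyMeasurable measurableSet_Ioo) ?_
    refine (ae_restrict_iff' measurableSet_Ioo).mpr (Filter.Eventually.of_forall fun u hu => ?_)
    rw [hnorm hu.1]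
    calc _ ≤ c * u ^ (r + 1) * u ^ (-(p + 1)) :=
          mul_le_mul_of_nonneg_right (hc u hu.1.le hu.2.le) (rpow_nonneg hu.1.le _)
      _ = c * u ^ ((r : ℝ) - p) := by
          rw [mul_assoc, ← rpow_natCast, ← rpow_add hu.1]
          push_cast
          ring_nf
  · refine Integrable.mono' (integrableOn_Ioi_rpow_of_lt (by linarith : -p < -1) zero_lt_one)
      ((hcont.mono (Set.Ioi_subset_Ioi zero_le_one)).aestronglyMeasurable measurableSet_Ioi) ?_
    refine (ae_restrict_iff' measurableSet_Ioi).mpr (Filter.Eventually.of_forall fun u hu => ?_)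
    have hu0 : (0 : ℝ) < u := zero_lt_one.trans hu
    rw [hnorm hu0]
    calc _ ≤ u * u ^ (-(p + 1)) :=
          mul_le_mul_of_nonneg_right (expTaylorGap_le_self r hu0.le) (rpow_nonneg hu0.le _)
      _ = u ^ (-p) := by
          rw [← rpow_one_add' hu0.le (by linarith)]
          ring_nf

noncomputable def expTaylorGapMoment (r : ℕ) (p : ℝ) : ℝ :=
  ∫ u in Set.Ioi 0, expTaylorGap r u * u ^ (-(p + 1))

theorem expTaylorGapMoment_pos (r : ℕ) {p : ℝ} (hp1 : 1 < p) (hpr : p < r + 1) :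
    0 < expTaylorGapMoment r p := by
  have hnonneg : 0 ≤ᵐ[volume.restrict (Set.Ioi 0)] fun u => expTaylorGap r u * u ^ (-(p + 1)) :=
    (ae_restrict_iff' measurableSet_Ioi).mpr (Filter.Eventually.of_forall fun u hu =>
      mul_nonneg (expTaylorGap_nonneg r (le_of_lt hu)) (rpow_nonneg (le_of_lt hu) _))
  rw [expTaylorGapMoment, setIntegral_pos_iff_support_of_nonneg_ae hnonneg
    (integrableOn_expTaylorGap_mul_rpow r hp1 hpr)]
  have hsupp : Set.Ioi 0 ⊆
      (Function.support fun u => expTaylorGap r u * u ^ (-(p + 1))) ∩ Set.Ioi 0 :=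
    fun u hu => ⟨(mul_pos (expTaylorGap_pos r hu) (rpow_pos_of_pos hu _)).ne', hu⟩
  exact (measure_mono hsupp).trans_lt' (by simp)

theorem eqOn_expTaylorGap_comp_mul (r : ℕ) (p : ℝ) {a : ℝ} (ha : 0 < a) :
    Set.EqOn (fun t => expTaylorGap r (a * t) * t ^ (-(p + 1)))
      (fun t => a ^ (p + 1) * (expTaylorGap r (a * t) * (a * t) ^ (-(p + 1)))) (Set.Ioi 0) := by
  intro t ht
  simp only [mul_rpow ha.le (le_of_lt ht), rpow_neg ha.le]
  field_simp [(rpow_pos_of_pos ha (p + 1)).ne']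

theorem integrableOn_expTaylorGap_comp_mul (r : ℕ) {p : ℝ} (hp1 : 1 < p) (hpr : p < r + 1)
    {a : ℝ} (ha : 0 ≤ a) :
    IntegrableOn (fun t => expTaylorGap r (a * t) * t ^ (-(p + 1))) (Set.Ioi 0) := by
  rcases ha.eq_or_lt with rfl | ha
  · simp [expTaylorGap_zero]
  have hcomp := (integrableOn_Ioi_comp_mul_left_iff
    (fun u => expTaylorGap r u * u ^ (-(p + 1))) 0 ha).mpr
    (by simpa using integrableOn_expTaylorGap_mul_rpow r hp1 hpr)
  exact IntegrableOn.congr_fun (hcomp.const_mul _) (eqOn_expTaylorGap_comp_mul r p ha).symm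
    measurableSet_Ioi

theorem integral_expTaylorGap_comp_mul (r : ℕ) (p : ℝ) {a : ℝ} (ha : 0 ≤ a) (hp : 0 < p) :
    ∫ t in Set.Ioi 0, expTaylorGap r (a * t) * t ^ (-(p + 1)) =
      a ^ p * expTaylorGapMoment r p := by
  rcases ha.eq_or_lt with rfl | ha
  · simp [expTaylorGap_zero, zero_rpow hp.ne']
  rw [setIntegral_congr_fun measurableSet_Ioi (eqOn_expTaylorGap_comp_mul r p ha),
    integral_const_mul,
    integral_comp_mul_left_Ioi (fun u => expTaylorGap r u * u ^ (-(p + 1))) 0 ha, mul_zero, smul_eq_mul, rpow_add_one ha.ne', expTaylorGapMoment]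
  field_simp

section PowerSums

variable {ι : Type*} [Fintype ι] {r : ℕ} {x y : ι → ℝ}

theorem sum_expTaylorGap_eq (hx : ∀ i, 0 ≤ x i) {t : ℝ} (ht : 0 ≤ t) :
    ∑ i, expTaylorGap r (x i * t) = (∑ i, x i) * t - log (∏ i, expTaylor r (x i * t)) := by
  rw [log_prod fun i _ => (expTaylor_pos r (mul_nonneg (hx i) ht)).ne', sum_mul, ← sum_sub_distrib]
  rfl

theorem sum_rpow_le_of_prod_expTaylor_le (hx : ∀ i, 0 ≤ x i) (hy : ∀ i, 0 ≤ y i)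
    (hprod : ∀ t, 0 ≤ t → ∏ i, expTaylor r (x i * t) ≤ ∏ i, expTaylor r (y i * t))
    (hsum : ∑ i, x i = ∑ i, y i) {p : ℝ} (hp1 : 1 < p) (hpr : p < r + 1) :
    ∑ i, y i ^ p ≤ ∑ i, x i ^ p := by
  have hpointwise : ∀ t ∈ Set.Ioi (0 : ℝ), ∑ i, expTaylorGap r (y i * t) * t ^ (-(p + 1)) ≤
      ∑ i, expTaylorGap r (x i * t) * t ^ (-(p + 1)) := by
    intro t ht
    rw [← sum_mul, ← sum_mul]
    refine mul_le_mul_of_nonneg_right ?_ (rpow_nonneg (le_of_lt ht) _)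
    rw [sum_expTaylorGap_eq hx (le_of_lt ht), sum_expTaylorGap_eq hy (le_of_lt ht), hsum]
    exact sub_le_sub_left (log_le_log (prod_pos fun i _ =>
      expTaylor_pos r (mul_nonneg (hx i) (le_of_lt ht))) (hprod t (le_of_lt ht))) _
  have hintegrable (z : ι → ℝ) (hz : ∀ i, 0 ≤ z i) (i : ι) :=
    integrableOn_expTaylorGap_comp_mul r hp1 hpr (hz i)
  have hmono : ∫ t in Set.Ioi 0, ∑ i, expTaylorGap r (y i * t) * t ^ (-(p + 1)) ≤
      ∫ t in Set.Ioi 0, ∑ i, expTaylorGap r (x i * t) * t ^ (-(p + 1)) :=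
    setIntegral_mono_on (integrable_finsetSum _ fun i _ => hintegrable y hy i)
      (integrable_finsetSum _ fun i _ => hintegrable x hx i) measurableSet_Ioi hpointwise
  rw [integral_finsetSum _ fun i _ => hintegrable y hy i,
    integral_finsetSum _ fun i _ => hintegrable x hx i] at hmono
  simp only [integral_expTaylorGap_comp_mul r p (hx _) (by linarith),
    integral_expTaylorGap_comp_mul r p (hy _) (by linarith), ← sum_mul] at hmono
  exact le_of_mul_le_mul_right hmono (expTaylorGapMoment_pos r hp1 hpr)

theorem sum_rpow_le_of_prod_expTaylor_le_of_mem_Icc (hx : ∀ i, 0 ≤ x i) (hy : ∀ i, 0 ≤ y i)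
    (hprod : ∀ t, 0 ≤ t → ∏ i, expTaylor r (x i * t) ≤ ∏ i, expTaylor r (y i * t))
    (hsum : ∑ i, x i = ∑ i, y i) {p : ℝ} (hp1 : 1 ≤ p) (hpr : p ≤ r + 1) :
    ∑ i, y i ^ p ≤ ∑ i, x i ^ p := by
  rcases hp1.eq_or_lt with rfl | hp1
  · simpa using hsum.ge
  have hIcc : closure (Set.Ioo 1 ((r : ℝ) + 1)) = Set.Icc (1 : ℝ) (r + 1) :=
    closure_Ioo (by linarith)
  have hcont (z : ι → ℝ) : ContinuousOn (fun q : ℝ => ∑ i, z i ^ q) (Set.Icc (1 : ℝ) (r + 1)) :=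
    continuousOn_finsetSum _ fun i _ =>
      continuousOn_const.rpow continuousOn_id fun q hq => Or.inr (by linarith [hq.1])
  rw [← hIcc] at hcont
  exact le_on_closure (fun q hq => sum_rpow_le_of_prod_expTaylor_le hx hy hprod hsum hq.1 hq.2)
    (hcont y) (hcont x) (hIcc ▸ ⟨hp1.le, hpr⟩)

end PowerSums

theorem stmt_1_general (n : ℕ) (x y : Fin n → ℝ)
    (hx : ∀ i, 0 ≤ x i) (hy : ∀ i, 0 ≤ y i) (r : ℕ)
    (hF : ∀ k : ℕ, r ≤ k → k ≤ n * r → Fcoeff n r k x ≤ Fcoeff n r k y)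
    (hsum : ∑ i, x i = ∑ i, y i) :
    ∀ p : ℝ, 1 ≤ p → p ≤ r + 1 → pNorm p y ≤ pNorm p x := by
  intro p hp1 hpr
  have hpow : ∑ i, y i ^ p ≤ ∑ i, x i ^ p :=
    sum_rpow_le_of_prod_expTaylor_le_of_mem_Icc hx hy
      (fun _ ht => prod_expTaylor_le_of_Fcoeff_le hF hsum ht) hsum hp1 hpr
  have hp0 : p ≠ 0 := by linarith
  rw [pNorm, pNorm, if_neg hp0, if_neg hp0]
  exact rpow_le_rpow (mul_nonneg (by positivity) (sum_nonneg fun i _ => rpow_nonneg (hy i) p))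
    (by gcongr) (by positivity)

theorem stmt_1 (n : ℕ) (hn : 1 ≤ n) (x y : Fin n → ℝ)
    (hx : ∀ i, 0 ≤ x i) (hy : ∀ i, 0 ≤ y i) (r : ℕ) (hr : 1 ≤ r)
    (hF : ∀ k : ℕ, r ≤ k → k ≤ n * r → Fcoeff n r k x ≤ Fcoeff n r k y)
    (hsum : ∑ i, x i = ∑ i, y i) :
    ∀ p : ℝ, 1 ≤ p → p ≤ r + 1 → pNorm p y ≤ pNorm p x :=
  stmt_1_general n x y hx hy r hF hsum
end

section
/- Fix an integer r ≥ 0 and a real number p with r < p < r+1. Then the improper integral C_p := ∫_0^∞ ψ_r(t) t^{−p−1} dt converges to a finite strictly positive value, and for every real a > 0 one has a^p = C_p^{−1} ∫_0^∞ ψ_r(a t) t^{−p−1} dt. -/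
/-!
`ψ_r(0) = 0` and `ψ_r'(t) = t^r / (1 + t)`, so `ψ_r > 0` on `(0, ∞)`, and comparing
`t^r / (1 + t)` with `t^(q-1)` gives `ψ_r(t) ≤ t^q / q` for every `q ∈ [r, r + 1]`, `q > 0`.
With `q = r + 1` near `0` and `q = (r + p) / 2 < p` near `∞` this makes `ψ_r(t) t^(-p-1)`
integrable on `(0, ∞)`. The formula for `a^p` is the substitution `t ↦ t / a`.
-/

open scoped BigOperators

/-- `Q_r(s) = Σ_{m=1}^r (-1)^(m-1) s^m / m`, the `r`-th Taylor polynomial of `log(1+s)`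
(`Q_0 = 0`), and `ψ_r(t) = (-1)^r (log(1+t) - Q_r(t))`. -/
noncomputable def psiFun (r : ℕ) (t : ℝ) : ℝ :=
  (-1 : ℝ) ^ r *
    (Real.log (1 + t) - ∑ m ∈ Finset.Icc 1 r, (-1 : ℝ) ^ (m - 1) * t ^ m / m)

open MeasureTheory Set Real

lemma one_add_mul_sum_Icc_alternating_pow (r : ℕ) (t : ℝ) :
    (1 + t) * ∑ m ∈ Finset.Icc 1 r, (-1 : ℝ) ^ (m - 1) * t ^ (m - 1) = 1 - (-t) ^ r := by
  induction r with
  | zero => simp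
  | succ n ih =>
    rw [Finset.sum_Icc_succ_top (by omega), Nat.add_sub_cancel, mul_add, ih, neg_pow, neg_pow]
    ring

lemma hasDerivAt_psiFun (r : ℕ) {t : ℝ} (ht : 1 + t ≠ 0) :
    HasDerivAt (psiFun r) (t ^ r / (1 + t)) t := by
  have hlog : HasDerivAt (fun s : ℝ => Real.log (1 + s)) (1 / (1 + t)) t := by
    simpa using ((hasDerivAt_id t).const_add 1).log ht
  have hpoly :
      HasDerivAt (fun s : ℝ => ∑ m ∈ Finset.Icc 1 r, (-1 : ℝ) ^ (m - 1) * s ^ m / m)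
        (∑ m ∈ Finset.Icc 1 r, (-1 : ℝ) ^ (m - 1) * t ^ (m - 1)) t := by
    refine HasDerivAt.fun_sum fun m hm => ?_
    have hm : (m : ℝ) ≠ 0 := Nat.cast_ne_zero.mpr (by grind)
    exact (((hasDerivAt_pow m t).const_mul ((-1 : ℝ) ^ (m - 1))).div_const (m : ℝ)).congr_deriv
      (by field_simp)
  refine ((hlog.sub hpoly).const_mul ((-1 : ℝ) ^ r)).congr_deriv ?_
  have hsum :
      ∑ m ∈ Finset.Icc 1 r, (-1 : ℝ) ^ (m - 1) * t ^ (m - 1) = (1 - (-t) ^ r) / (1 + t) := by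
    rw [eq_div_iff ht, mul_comm, one_add_mul_sum_Icc_alternating_pow]
  rw [hsum, ← sub_div, sub_sub_cancel, ← mul_div_assoc, ← mul_pow]
  simp

lemma psiFun_zero (r : ℕ) : psiFun r 0 = 0 := by
  refine (mul_eq_zero_of_right _ ?_)
  rw [add_zero, Real.log_one, zero_sub, neg_eq_zero]
  exact Finset.sum_eq_zero fun m hm => by simp [zero_pow (by grind : m ≠ 0)]

lemma intervalIntegrable_pow_div_one_add (r : ℕ) {t : ℝ} (ht : -1 < t) :
    IntervalIntegrable (fun s : ℝ => s ^ r / (1 + s)) volume 0 t := by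
  refine ContinuousOn.intervalIntegrable ((continuousOn_pow r).div (by fun_prop) fun s hs => ?_)
  have := min_le_iff.mp hs.1
  grind

lemma psiFun_eq_integral (r : ℕ) {t : ℝ} (ht : -1 < t) :
    psiFun r t = ∫ s in (0 : ℝ)..t, s ^ r / (1 + s) := by
  have hderiv : ∀ s ∈ uIcc 0 t, HasDerivAt (psiFun r) (s ^ r / (1 + s)) s := fun s hs =>
    hasDerivAt_psiFun r (by have := min_le_iff.mp hs.1; grind)
  rw [intervalIntegral.integral_eq_sub_of_hasDerivAt hderiv
    (intervalIntegrable_pow_div_one_add r ht), psiFun_zero, sub_zero]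

lemma psiFun_pos (r : ℕ) {t : ℝ} (ht : 0 < t) : 0 < psiFun r t := by
  rw [psiFun_eq_integral r (by linarith)]
  refine intervalIntegral.intervalIntegral_pos_of_pos_on
    (intervalIntegrable_pow_div_one_add r (by linarith)) (fun s hs => ?_) ht
  have := hs.1
  positivity

lemma pow_div_one_add_le_rpow_sub_one (r : ℕ) {q x : ℝ} (hrq : (r : ℝ) ≤ q)
    (hqr : q ≤ r + 1) (hx : 0 < x) : x ^ r / (1 + x) ≤ x ^ (q - 1) := by
  rw [div_le_iff₀ (by positivity), ← rpow_natCast]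
  calc x ^ (r : ℝ) ≤ x ^ (q - 1) + x ^ q := by
        rcases le_total x 1 with hx1 | hx1
        · linarith [rpow_le_rpow_of_exponent_ge hx hx1 (by linarith : q - 1 ≤ r),
            rpow_nonneg hx.le q]
        · linarith [rpow_le_rpow_of_exponent_le hx1 hrq, rpow_nonneg hx.le (q - 1)]
    _ = x ^ (q - 1) * (1 + x) := by
        rw [mul_one_add, ← rpow_add_one hx.ne', sub_add_cancel]

lemma psiFun_le_rpow_div (r : ℕ) {q t : ℝ} (hq : 0 < q) (hrq : (r : ℝ) ≤ q)
    (hqr : q ≤ r + 1) (ht : 0 < t) : psiFun r t ≤ t ^ q / q := by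
  have hrpow : ∫ s in (0 : ℝ)..t, s ^ (q - 1) = t ^ q / q := by
    rw [integral_rpow (Or.inl (by linarith)), zero_rpow (by linarith), sub_zero, sub_add_cancel]
  rw [psiFun_eq_integral r (by linarith), ← hrpow]
  refine intervalIntegral.integral_mono_on_of_le_Ioo ht.le
    (intervalIntegrable_pow_div_one_add r (by linarith))
    (intervalIntegral.intervalIntegrable_rpow' (by linarith))
    (fun s hs => pow_div_one_add_le_rpow_sub_one r hrq hqr hs.1)

lemma integrableOn_psiFun_mul_rpow_of_integrableOn_rpow (r : ℕ) {p q : ℝ} {s : Set ℝ}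
    (hs : s ⊆ Ioi 0) (hsm : MeasurableSet s) (hq : 0 < q) (hrq : (r : ℝ) ≤ q)
    (hqr : q ≤ r + 1) (hint : IntegrableOn (fun t : ℝ => t ^ (q - p - 1)) s) :
    IntegrableOn (fun t : ℝ => psiFun r t * t ^ (-p - 1)) s := by
  have hcont : ContinuousOn (fun t : ℝ => psiFun r t * t ^ (-p - 1)) s := fun t ht =>
    have htpos : 0 < t := hs ht
    ((hasDerivAt_psiFun r (by linarith)).continuousAt.mul
      (continuousAt_rpow_const t _ (Or.inl htpos.ne'))).continuousWithinAt
  refine (hint.div_const q).mono' (hcont.aestronglyMeasurable hsm) ?_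
  filter_upwards [ae_restrict_mem hsm] with t ht
  replace ht : 0 < t := hs ht
  rw [Real.norm_of_nonneg (mul_pos (psiFun_pos r ht) (rpow_pos_of_pos ht _)).le]
  calc psiFun r t * t ^ (-p - 1) ≤ t ^ q / q * t ^ (-p - 1) :=
        mul_le_mul_of_nonneg_right (psiFun_le_rpow_div r hq hrq hqr ht) (rpow_nonneg ht.le _)
    _ = t ^ (q - p - 1) / q := by
        rw [div_mul_eq_mul_div, ← rpow_add ht]
        ring_nf

lemma integrableOn_psiFun_mul_rpow {r : ℕ} {p : ℝ} (h1 : (r : ℝ) < p) (h2 : p < r + 1) :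
    IntegrableOn (fun t : ℝ => psiFun r t * t ^ (-p - 1)) (Ioi 0) := by
  have hp : 0 < p := (Nat.cast_nonneg r).trans_lt h1
  rw [← Ioc_union_Ioi_eq_Ioi zero_le_one]
  refine IntegrableOn.union ?_ ?_
  · exact integrableOn_psiFun_mul_rpow_of_integrableOn_rpow r Ioc_subset_Ioi_self
      measurableSet_Ioc (by positivity) (by linarith) le_rfl
      (intervalIntegral.intervalIntegrable_rpow' (by linarith)).1
  · exact integrableOn_psiFun_mul_rpow_of_integrableOn_rpow r (Ioi_subset_Ioi zero_le_one)
      measurableSet_Ioi (q := (r + p) / 2) (by positivity) (by linarith) (by linarith)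
      (integrableOn_Ioi_rpow_of_lt (by linarith) one_pos)

lemma integral_psiFun_mul_rpow_pos {r : ℕ} {p : ℝ} (h1 : (r : ℝ) < p) (h2 : p < r + 1) :
    0 < ∫ t in Ioi (0 : ℝ), psiFun r t * t ^ (-p - 1) := by
  have hpos : ∀ t ∈ Ioi (0 : ℝ), 0 < psiFun r t * t ^ (-p - 1) := fun t ht =>
    mul_pos (psiFun_pos r ht) (rpow_pos_of_pos ht _)
  rw [setIntegral_pos_iff_support_of_nonneg_ae
    ((ae_restrict_iff' measurableSet_Ioi).mpr (.of_forall fun t ht => (hpos t ht).le))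
    (integrableOn_psiFun_mul_rpow h1 h2)]
  calc (0 : ENNReal) < volume (Ioi (0 : ℝ)) := by simp
    _ ≤ _ := measure_mono fun t ht => mem_inter (hpos t ht).ne' ht

lemma integral_Ioi_comp_mul_mul_rpow (g : ℝ → ℝ) (p : ℝ) {a : ℝ} (ha : 0 < a) :
    ∫ t in Ioi (0 : ℝ), g (a * t) * t ^ (-p - 1) =
      a ^ p * ∫ t in Ioi (0 : ℝ), g t * t ^ (-p - 1) := by
  have hscale : ∀ t ∈ Ioi (0 : ℝ),
      g (a * t) * t ^ (-p - 1) = a ^ (p + 1) * (g (a * t) * (a * t) ^ (-p - 1)) := fun t ht => by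
    rw [mul_rpow ha.le (le_of_lt ht), mul_left_comm, ← mul_assoc (a ^ (p + 1)), ← rpow_add ha]
    simp
  rw [setIntegral_congr_fun measurableSet_Ioi hscale, integral_const_mul,
    integral_comp_mul_left_Ioi (fun t => g t * t ^ (-p - 1)) 0 ha, mul_zero, smul_eq_mul,
    ← mul_assoc, ← rpow_neg_one, ← rpow_add ha]
  ring_nf

theorem stmt_4 (r : ℕ) (p : ℝ) (h1 : (r : ℝ) < p) (h2 : p < r + 1) :
    MeasureTheory.IntegrableOn (fun t : ℝ => psiFun r t * t ^ (-p - 1)) (Set.Ioi 0) ∧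
    0 < ∫ t in Set.Ioi (0 : ℝ), psiFun r t * t ^ (-p - 1) ∧
    ∀ a : ℝ, 0 < a →
      a ^ p = (∫ t in Set.Ioi (0 : ℝ), psiFun r t * t ^ (-p - 1))⁻¹ *
        ∫ t in Set.Ioi (0 : ℝ), psiFun r (a * t) * t ^ (-p - 1) := by
  have hpos := integral_psiFun_mul_rpow_pos h1 h2
  refine ⟨integrableOn_psiFun_mul_rpow h1 h2, hpos, fun a ha => ?_⟩
  rw [integral_Ioi_comp_mul_mul_rpow (psiFun r) p ha, mul_left_comm, inv_mul_cancel₀ hpos.ne',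
    mul_one]
end

section
/- Fix integers r ≥ 0, k ≥ 1 and n ≥ 1. Then G_{k,r}, regarded as a polynomial in the n variables x_1,…,x_n (with rational coefficients), is a symmetric polynomial and every coefficient of every monomial in G_{k,r} is nonnegative. -/
open scoped BigOperators

/-- `exp F = Σ_{j≥0} F^j / j!` for a formal power series `F` (intended for `F` with zero
constant term; the defining sum is truncated at order `k` when extracting the `k`-th
coefficient, which agrees with `Σ_{j≥0} F^j / j!` whenever `F` has zero constant term). -/
noncomputable def expPS {R : Type*} [CommRing R] [Algebra ℚ R] (F : PowerSeries R) :
    PowerSeries R :=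
  PowerSeries.mk fun k =>
    PowerSeries.coeff k (∑ j ∈ Finset.range (k + 1), (Nat.factorial j : ℚ)⁻¹ • F ^ j)

/-- The generating function
`g_r(x,t) = (Π_i (1 + x_i t)) · exp(-Σ_i Q_r(x_i t) + Q_r^-(t Σ_i x_i))`,
as a formal power series in `t` over `ℚ[x_1,…,x_n]`, where
`Q_r(s) = Σ_{m=1}^r (-1)^(m-1) s^m/m` and `Q_r^-(s) = Σ_{odd m ≤ r} s^m/m`. -/
noncomputable def gSeries (n r : ℕ) : PowerSeries (MvPolynomial (Fin n) ℚ) :=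
  (∏ i, (1 + PowerSeries.C (MvPolynomial.X i : MvPolynomial (Fin n) ℚ) * PowerSeries.X)) *
    expPS (PowerSeries.mk fun m =>
      if 1 ≤ m ∧ m ≤ r then
        (-((-1 : ℚ) ^ (m - 1) * (m : ℚ)⁻¹)) • ∑ i, MvPolynomial.X i ^ m
          + (if Odd m then ((m : ℚ)⁻¹) • (∑ i, MvPolynomial.X i) ^ m else 0)
      else 0)

/-- `G_{k,r}` as a polynomial in `x_1,…,x_n` over `ℚ`: the coefficient of `t^k` in
`g_r(x,t)`. -/
noncomputable def Gpoly (n r k : ℕ) : MvPolynomial (Fin n) ℚ :=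
  PowerSeries.coeff k (gSeries n r)

/-- `G_{k,r}(x)` for a real vector `x`. -/
noncomputable def GReal {n : ℕ} (r k : ℕ) (x : Fin n → ℝ) : ℝ :=
  MvPolynomial.aeval x (Gpoly n r k)

/-!
Symmetry: permuting the variables coefficientwise permutes the factors `1 + x_i t` and fixes the
exponent, whose coefficients are built from the power sums `p_m = Σ x_i^m` and `p_1`.

Positivity: the exponent is `Σ_{m ≤ r} c_m t^m` with `c_m = p_m / m` for even `m` and
`c_m = (p_1^m - p_m) / m` for odd `m`, and `p_1^m - p_m` is the sum of the monomials
`x_{w 1} ⋯ x_{w m}` over the non-constant words `w`. Power series whose coefficients have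
nonnegative coefficients form a semiring closed under `exp`, and it contains the exponent and
every `1 + x_i t`.
-/

open Finset

namespace MvPolynomial

variable (σ : Type*) {R : Type*} [CommSemiring R]

def coeffsInSubsemiring (S : Subsemiring R) : Subsemiring (MvPolynomial σ R) where
  carrier := {p | ∀ m, p.coeff m ∈ S}
  zero_mem' _ := by simp
  one_mem' m := by
    classical
    rw [coeff_one]
    split_ifs
    exacts [S.one_mem, S.zero_mem]
  add_mem' hp hq m := by
    rw [coeff_add]
    exact S.add_mem (hp m) (hq m)
  mul_mem' {p q} hp hq m := by
    classical
    rw [coeff_mul]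
    exact S.sum_mem fun x _ => S.mul_mem (hp x.1) (hq x.2)

variable {σ} {S : Subsemiring R}

theorem X_mem_coeffsInSubsemiring (i : σ) : X i ∈ coeffsInSubsemiring σ S := fun m => by
  classical
  rw [coeff_X]
  split_ifs
  exacts [S.one_mem, S.zero_mem]

theorem C_mem_coeffsInSubsemiring {c : R} (hc : c ∈ S) : C c ∈ coeffsInSubsemiring σ S :=
  fun m => by
    classical
    rw [coeff_C]
    split_ifs
    exacts [hc, S.zero_mem]

theorem smul_mem_coeffsInSubsemiring {c : R} (hc : c ∈ S) {p : MvPolynomial σ R}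
    (hp : p ∈ coeffsInSubsemiring σ S) : c • p ∈ coeffsInSubsemiring σ S := by
  rw [smul_eq_C_mul]
  exact mul_mem (C_mem_coeffsInSubsemiring hc) hp

end MvPolynomial

namespace PowerSeries

variable {R : Type*} [CommSemiring R]

def coeffsInSubsemiring (S : Subsemiring R) : Subsemiring R⟦X⟧ where
  carrier := {f | ∀ k, coeff k f ∈ S}
  zero_mem' _ := by simp
  one_mem' k := by
    rw [coeff_one]
    split_ifs
    exacts [S.one_mem, S.zero_mem]
  add_mem' hf hg k := by
    rw [map_add]
    exact S.add_mem (hf k) (hg k)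
  mul_mem' hf hg k := by
    rw [coeff_mul]
    exact S.sum_mem fun x _ => S.mul_mem (hf x.1) (hg x.2)

variable {S : Subsemiring R}

theorem X_mem_coeffsInSubsemiring : (X : R⟦X⟧) ∈ coeffsInSubsemiring S := fun k => by
  rw [coeff_X]
  split_ifs
  exacts [S.one_mem, S.zero_mem]

theorem C_mem_coeffsInSubsemiring {c : R} (hc : c ∈ S) : C c ∈ coeffsInSubsemiring S :=
  fun k => by
    rw [coeff_C]
    split_ifs
    exacts [hc, S.zero_mem]

end PowerSeries

section expPS

variable {R : Type*} [CommRing R] [Algebra ℚ R]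

theorem coeff_expPS (F : PowerSeries R) (k : ℕ) :
    PowerSeries.coeff k (expPS F) =
      ∑ j ∈ range (k + 1), (j.factorial : ℚ)⁻¹ • PowerSeries.coeff k (F ^ j) := by
  simp only [expPS, PowerSeries.coeff_mk, map_sum, PowerSeries.coeff_smul]

theorem expPS_mem_coeffsInSubsemiring {S : Subsemiring R}
    (hS : ∀ c : ℚ, 0 ≤ c → ∀ x ∈ S, c • x ∈ S) {F : PowerSeries R}
    (hF : F ∈ PowerSeries.coeffsInSubsemiring S) :
    expPS F ∈ PowerSeries.coeffsInSubsemiring S := fun k => by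
  rw [coeff_expPS]
  exact S.sum_mem fun j _ => hS _ (by positivity) _ (pow_mem hF j k)

theorem map_expPS {B : Type*} [CommRing B] [Algebra ℚ B] (f : R →ₐ[ℚ] B)
    (F : PowerSeries R) :
    PowerSeries.map (f : R →+* B) (expPS F) = expPS (PowerSeries.map (f : R →+* B) F) := by
  ext k
  simp only [PowerSeries.coeff_map, coeff_expPS, map_sum, ← map_pow, RingHom.coe_coe,
    map_smul]

end expPS

theorem Fintype.sum_pow_eq_sum_pow_add_sum_nonconst {ι R : Type*} [Fintype ι] [DecidableEq ι]
    [CommSemiring R] (f : ι → R) {m : ℕ} (hm : m ≠ 0) :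
    (∑ i, f i) ^ m =
      ∑ i, f i ^ m + ∑ w ∈ (univ.image (Function.const (Fin m)))ᶜ, ∏ j, f (w j) := by
  have : Nonempty (Fin m) := ⟨⟨0, Nat.pos_of_ne_zero hm⟩⟩
  have hconst : ∑ w ∈ univ.image (Function.const (Fin m)), ∏ j, f (w j) = ∑ i, f i ^ m := by
    rw [sum_image fun i _ j _ h => Function.const_injective h]
    simp
  rw [← hconst, sum_add_sum_compl, Fintype.sum_pow]

section gSeries

open MvPolynomial

variable {n : ℕ}

local notation "nonnegCoeffs" => coeffsInSubsemiring (Fin n) (Subsemiring.nonneg ℚ)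

theorem sum_X_pow_sub_sum_X_pow_mem_nonnegCoeffs {m : ℕ} (hm : m ≠ 0) :
    (∑ i : Fin n, X i) ^ m - ∑ i : Fin n, X i ^ m ∈ nonnegCoeffs := by
  rw [Fintype.sum_pow_eq_sum_pow_add_sum_nonconst _ hm, add_sub_cancel_left]
  exact sum_mem fun w _ => prod_mem fun j _ => X_mem_coeffsInSubsemiring (w j)

theorem rat_smul_mem_nonnegCoeffs {c : ℚ} (hc : 0 ≤ c) {p : MvPolynomial (Fin n) ℚ}
    (hp : p ∈ nonnegCoeffs) : c • p ∈ nonnegCoeffs :=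
  smul_mem_coeffsInSubsemiring hc hp

variable (n) in
noncomputable def gExponent (r : ℕ) : PowerSeries (MvPolynomial (Fin n) ℚ) :=
  PowerSeries.mk fun m =>
    if 1 ≤ m ∧ m ≤ r then
      (-((-1 : ℚ) ^ (m - 1) * (m : ℚ)⁻¹)) • ∑ i, MvPolynomial.X i ^ m
        + (if Odd m then ((m : ℚ)⁻¹) • (∑ i, MvPolynomial.X i) ^ m else 0)
    else 0

theorem gSeries_eq (r : ℕ) :
    gSeries n r = (∏ i, (1 + PowerSeries.C (X i : MvPolynomial (Fin n) ℚ) * PowerSeries.X)) *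
      expPS (gExponent n r) :=
  rfl

theorem isSymmetric_coeff_gExponent (r m : ℕ) :
    (PowerSeries.coeff m (gExponent n r)).IsSymmetric := by
  have hp (k : ℕ) :
      (∑ i : Fin n, X i ^ k : MvPolynomial (Fin n) ℚ) ∈ symmetricSubalgebra (Fin n) ℚ :=
    psum_isSymmetric (Fin n) ℚ k
  have hp1 :
      (∑ i : Fin n, X i : MvPolynomial (Fin n) ℚ) ∈ symmetricSubalgebra (Fin n) ℚ := by
    simpa only [pow_one] using hp 1
  rw [← mem_symmetricSubalgebra, gExponent, PowerSeries.coeff_mk]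
  split_ifs
  exacts [add_mem (Subalgebra.smul_mem _ (hp m) _) (Subalgebra.smul_mem _ (pow_mem hp1 m) _),
    add_mem (Subalgebra.smul_mem _ (hp m) _) (zero_mem _), zero_mem _]

theorem coeff_gExponent_mem_nonnegCoeffs (r m : ℕ) :
    PowerSeries.coeff m (gExponent n r) ∈ nonnegCoeffs := by
  rw [gExponent, PowerSeries.coeff_mk]
  split_ifs with hmr hodd
  · rw [(Nat.Odd.sub_odd hodd odd_one).neg_one_pow, one_mul, neg_smul, neg_add_eq_sub,
      ← smul_sub]
    exact rat_smul_mem_nonnegCoeffs (by positivity)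
      (sum_X_pow_sub_sum_X_pow_mem_nonnegCoeffs (by omega))
  · have hodd' : Odd (m - 1) := Nat.Even.sub_odd hmr.1 (Nat.not_odd_iff_even.mp hodd) odd_one
    rw [hodd'.neg_one_pow, add_zero, neg_one_mul, neg_neg]
    exact rat_smul_mem_nonnegCoeffs (by positivity)
      (sum_mem fun i _ => pow_mem (X_mem_coeffsInSubsemiring i) m)
  · exact zero_mem _

theorem gSeries_mem_coeffsInSubsemiring (r : ℕ) :
    gSeries n r ∈ PowerSeries.coeffsInSubsemiring nonnegCoeffs := by
  rw [gSeries_eq]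
  refine mul_mem (prod_mem fun i _ => add_mem (one_mem _) (mul_mem ?_ ?_))
    (expPS_mem_coeffsInSubsemiring (fun _ hc _ => rat_smul_mem_nonnegCoeffs hc)
      (coeff_gExponent_mem_nonnegCoeffs r))
  exacts [PowerSeries.C_mem_coeffsInSubsemiring (X_mem_coeffsInSubsemiring i),
    PowerSeries.X_mem_coeffsInSubsemiring]

theorem map_rename_gSeries (r : ℕ) (e : Equiv.Perm (Fin n)) :
    PowerSeries.map (rename e : MvPolynomial (Fin n) ℚ →ₐ[ℚ] MvPolynomial (Fin n) ℚ)
      (gSeries n r) = gSeries n r := by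
  rw [gSeries_eq, map_mul, map_prod]
  congr 1
  · simp only [map_add, map_one, map_mul, PowerSeries.map_C, PowerSeries.map_X,
      RingHom.coe_coe, rename_X]
    exact Equiv.prod_comp e fun i => 1 + PowerSeries.C (X i) * PowerSeries.X
  · rw [map_expPS]
    congr 1
    refine PowerSeries.ext fun m => ?_
    rw [PowerSeries.coeff_map]
    exact isSymmetric_coeff_gExponent r m e

end gSeries

theorem stmt_7_general (r k n : ℕ) :
    MvPolynomial.IsSymmetric (Gpoly n r k) ∧
    ∀ m : (Fin n) →₀ ℕ, 0 ≤ MvPolynomial.coeff m (Gpoly n r k) := by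
  refine ⟨fun e => ?_, gSeries_mem_coeffsInSubsemiring r k⟩
  have h := congrArg (PowerSeries.coeff k) (map_rename_gSeries r e)
  rwa [PowerSeries.coeff_map] at h

theorem stmt_7 (r k n : ℕ) (hk : 1 ≤ k) (hn : 1 ≤ n) :
    MvPolynomial.IsSymmetric (Gpoly n r k) ∧
    ∀ m : (Fin n) →₀ ℕ, 0 ≤ MvPolynomial.coeff m (Gpoly n r k) :=
  stmt_7_general r k n
end

section
/- Let n ≥ 1, let x, y ∈ [0,∞)^n, and fix an integer r ≥ 1. If Σ_{i=1}^n φ_r(x_i t) ≥ Σ_{i=1}^n φ_r(y_i t) for all real t > 0, then ‖x‖_p ≥ ‖y‖_p for every real p with r ≤ p ≤ 2r. -/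
open scoped BigOperators

/-- `φ_r(t) = t^r - log(1 + t^r)`. -/
noncomputable def phiFun (r : ℕ) (t : ℝ) : ℝ :=
  t ^ r - Real.log (1 + t ^ r)

/-!
Since `0 ≤ φ_r(t) ≤ min (t ^ r) (t ^ (2r))`, for `r < p < 2r` the Mellin-type integral
`C_p = ∫₀^∞ t^(-p-1) φ_r(t) dt` converges and is positive, and the substitution `t ↦ a t` gives
`∫₀^∞ t^(-p-1) φ_r(a t) dt = C_p a^p`. Integrating the hypothesis against `t^(-p-1)` therefore
yields `Σ yᵢ^p ≤ Σ xᵢ^p`; the endpoints `p = r, 2r` follow by continuity in `p`, and the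
`p`-norm is monotone in the power sum.
-/

open MeasureTheory Set Filter Asymptotics Topology

theorem integral_rpow_mul_comp_mul_left (f : ℝ → ℝ) (p : ℝ) {a : ℝ} (ha : 0 < a) :
    ∫ t in Ioi 0, t ^ (-p - 1) * f (a * t) = a ^ p * ∫ t in Ioi 0, t ^ (-p - 1) * f t := by
  have hscale : EqOn (fun t : ℝ => t ^ (-p - 1) * f (a * t))
      (fun t => a ^ (p + 1) * ((a * t) ^ (-p - 1) * f (a * t))) (Ioi 0) := fun t ht => by
    dsimp only
    rw [Real.mul_rpow ha.le (le_of_lt ht), ← mul_assoc, ← mul_assoc, ← Real.rpow_add ha]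
    simp
  rw [setIntegral_congr_fun measurableSet_Ioi hscale, integral_const_mul,
    integral_comp_mul_left_Ioi (fun u => u ^ (-p - 1) * f u) 0 ha, mul_zero, smul_eq_mul,
    ← mul_assoc, ← Real.rpow_neg_one a, ← Real.rpow_add ha]
  norm_num

namespace phiFun

variable {r : ℕ} {t : ℝ}

theorem nonneg (ht : 0 ≤ t) : 0 ≤ phiFun r t := by
  have := Real.log_le_sub_one_of_pos (x := 1 + t ^ r) (by positivity)
  simp only [phiFun]; linarith

theorem pos (ht : 0 < t) : 0 < phiFun r t := by
  have htr : 0 < t ^ r := pow_pos ht r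
  have := Real.log_lt_sub_one_of_pos (x := 1 + t ^ r) (by positivity) (by linarith)
  simp only [phiFun]; linarith

theorem le_pow (ht : 0 ≤ t) : phiFun r t ≤ t ^ r := by
  have : 0 ≤ Real.log (1 + t ^ r) := Real.log_nonneg (by simp; positivity)
  simp only [phiFun]; linarith

theorem le_pow_two_mul (ht : 0 ≤ t) : phiFun r t ≤ t ^ (2 * r) := by
  have hv : 0 ≤ t ^ r := pow_nonneg ht r
  have hlog := Real.one_sub_inv_le_log_of_pos (x := 1 + t ^ r) (by positivity)
  -- with `v = t ^ r`, `(1 + v)⁻¹ ≤ 1 - v + v ^ 2` is `1 ≤ 1 + v ^ 3`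
  have hinv : (1 + t ^ r)⁻¹ ≤ 1 - t ^ r + (t ^ r) ^ 2 :=
    (inv_le_iff_one_le_mul₀ (by positivity)).mpr (by nlinarith [pow_nonneg hv 3])
  rw [pow_mul']
  simp only [phiFun]
  linarith

theorem zero (hr : r ≠ 0) : phiFun r 0 = 0 := by
  simp [phiFun, zero_pow hr]

theorem continuousOn : ContinuousOn (phiFun r) (Ici 0) :=
  (continuousOn_pow r).sub <| ((continuous_const.add (continuous_pow r)).continuousOn).log
    fun _ ht => (add_pos_of_pos_of_nonneg one_pos (pow_nonneg ht r)).ne'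

end phiFun

section PowerSums

variable {r : ℕ} {p : ℝ}

theorem isBigO_phiFun_comp_mul {l : Filter ℝ} (hl : ∀ᶠ t in l, 0 ≤ t) {a : ℝ} (ha : 0 ≤ a)
    {m : ℕ} (hm : ∀ u, 0 ≤ u → phiFun r u ≤ u ^ m) :
    (fun t => phiFun r (a * t)) =O[l] fun t => t ^ (m : ℝ) := by
  refine IsBigO.of_bound (a ^ m) (hl.mono fun t ht => ?_)
  have hat : 0 ≤ a * t := mul_nonneg ha ht
  rw [Real.norm_of_nonneg (phiFun.nonneg hat), Real.rpow_natCast,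
    Real.norm_of_nonneg (pow_nonneg ht m), ← mul_pow]
  exact hm _ hat

theorem integrableOn_rpow_mul_phiFun_comp_mul (hrp : (r : ℝ) < p) (hp : p < 2 * r)
    {a : ℝ} (ha : 0 ≤ a) :
    IntegrableOn (fun t => t ^ (-p - 1) * phiFun r (a * t)) (Ioi 0) := by
  refine mellin_convergent_of_isBigO_scalar (a := -r) (b := -(2 * r : ℕ)) ?_ ?_ (by linarith)
    ?_ (by push_cast; linarith)
  · exact (phiFun.continuousOn.comp (continuous_const_mul a).continuousOn
      fun t ht => mul_nonneg ha (le_of_lt ht)).locallyIntegrableOn measurableSet_Ioi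
  · simpa only [neg_neg] using isBigO_phiFun_comp_mul (eventually_ge_atTop 0) ha
      fun _ hu => phiFun.le_pow hu
  · simpa only [neg_neg] using isBigO_phiFun_comp_mul (l := 𝓝[>] 0)
      (eventually_mem_nhdsWithin.mono fun _ ht => le_of_lt ht) ha
      fun _ hu => phiFun.le_pow_two_mul hu

theorem integral_rpow_mul_phiFun_pos (hrp : (r : ℝ) < p) (hp : p < 2 * r) :
    0 < ∫ t in Ioi 0, t ^ (-p - 1) * phiFun r t := by
  have hint := integrableOn_rpow_mul_phiFun_comp_mul hrp hp zero_le_one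
  simp only [one_mul] at hint
  refine (setIntegral_pos_iff_support_of_nonneg_ae ?_ hint).mpr ?_
  · filter_upwards [ae_restrict_mem measurableSet_Ioi] with t ht
    exact mul_nonneg (Real.rpow_nonneg (le_of_lt ht) _) (phiFun.nonneg (le_of_lt ht))
  · have : Ioi (0 : ℝ) ⊆ Function.support (fun t => t ^ (-p - 1) * phiFun r t) ∩ Ioi 0 :=
      fun t ht => ⟨(mul_pos (Real.rpow_pos_of_pos ht _) (phiFun.pos ht)).ne', ht⟩
    exact (measure_mono this).trans_lt' (by simp)

theorem integral_rpow_mul_sum_phiFun {n : ℕ} {z : Fin n → ℝ} (hz : ∀ i, 0 ≤ z i)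
    (hrp : (r : ℝ) < p) (hp : p < 2 * r) :
    ∫ t in Ioi 0, t ^ (-p - 1) * ∑ i, phiFun r (z i * t)
      = (∫ t in Ioi 0, t ^ (-p - 1) * phiFun r t) * ∑ i, z i ^ p := by
  have hr : (0 : ℝ) < r := by linarith
  simp_rw [Finset.mul_sum]
  rw [integral_finsetSum _ fun i _ => integrableOn_rpow_mul_phiFun_comp_mul hrp hp (hz i)]
  refine Finset.sum_congr rfl fun i _ => ?_
  rcases (hz i).eq_or_lt with hzi | hzi
  · simp [← hzi, phiFun.zero (Nat.cast_pos.mp hr).ne', Real.zero_rpow (hr.trans hrp).ne']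
  · rw [integral_rpow_mul_comp_mul_left _ p hzi, mul_comm]

theorem sum_rpow_le_of_sum_phiFun_le {n : ℕ} {x y : Fin n → ℝ} (hx : ∀ i, 0 ≤ x i)
    (hy : ∀ i, 0 ≤ y i)
    (h : ∀ t : ℝ, 0 < t → ∑ i, phiFun r (y i * t) ≤ ∑ i, phiFun r (x i * t))
    (hrp : (r : ℝ) < p) (hp : p < 2 * r) :
    ∑ i, y i ^ p ≤ ∑ i, x i ^ p := by
  have hsum (z : Fin n → ℝ) (hz : ∀ i, 0 ≤ z i) :
      IntegrableOn (fun t => t ^ (-p - 1) * ∑ i, phiFun r (z i * t)) (Ioi 0) := by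
    simp_rw [Finset.mul_sum]
    exact integrable_finsetSum _ fun i _ => integrableOn_rpow_mul_phiFun_comp_mul hrp hp (hz i)
  refine le_of_mul_le_mul_left ?_ (integral_rpow_mul_phiFun_pos hrp hp)
  rw [← integral_rpow_mul_sum_phiFun hx hrp hp, ← integral_rpow_mul_sum_phiFun hy hrp hp]
  exact setIntegral_mono_on (hsum y hy) (hsum x hx) measurableSet_Ioi fun t ht =>
    mul_le_mul_of_nonneg_left (h t ht) (Real.rpow_nonneg (le_of_lt ht) _)

theorem continuousOn_sum_rpow {n : ℕ} (x : Fin n → ℝ) :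
    ContinuousOn (fun q : ℝ => ∑ i, x i ^ q) (Ioi 0) :=
  continuousOn_finsetSum _ fun i _ _ hq =>
    (Real.continuousAt_const_rpow' (ne_of_gt hq) (a := x i)).continuousWithinAt

theorem sum_rpow_le_on_Icc {n : ℕ} {x y : Fin n → ℝ} {a b : ℝ} (ha : 0 < a) (hab : a < b)
    (h : ∀ q ∈ Ioo a b, ∑ i, y i ^ q ≤ ∑ i, x i ^ q) :
    ∀ q ∈ Icc a b, ∑ i, y i ^ q ≤ ∑ i, x i ^ q := by
  have hcont (z : Fin n → ℝ) : ContinuousOn (fun q : ℝ => ∑ i, z i ^ q) (closure (Ioo a b)) :=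
    (continuousOn_sum_rpow z).mono <| by
      rw [closure_Ioo hab.ne]; exact fun q hq => ha.trans_le hq.1
  rw [← closure_Ioo hab.ne]
  exact le_on_closure h (hcont y) (hcont x)

theorem pNorm_le_pNorm_of_sum_rpow_le {n : ℕ} {x y : Fin n → ℝ} (hy : ∀ i, 0 ≤ y i)
    (hp : 0 < p) (h : ∑ i, y i ^ p ≤ ∑ i, x i ^ p) :
    pNorm p y ≤ pNorm p x := by
  have hy' : 0 ≤ (n : ℝ)⁻¹ * ∑ i, y i ^ p :=
    mul_nonneg (by positivity) (Finset.sum_nonneg fun i _ => Real.rpow_nonneg (hy i) p)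
  simp only [pNorm, if_neg hp.ne']
  exact Real.rpow_le_rpow hy' (mul_le_mul_of_nonneg_left h (by positivity)) (by positivity)

end PowerSums

theorem stmt_11_general (n : ℕ) (x y : Fin n → ℝ)
    (hx : ∀ i, 0 ≤ x i) (hy : ∀ i, 0 ≤ y i) (r : ℕ) (hr : 1 ≤ r)
    (h : ∀ t : ℝ, 0 < t → ∑ i, phiFun r (y i * t) ≤ ∑ i, phiFun r (x i * t)) :
    ∀ p : ℝ, (r : ℝ) ≤ p → p ≤ 2 * r → pNorm p y ≤ pNorm p x := by
  have hr0 : (0 : ℝ) < r := by exact_mod_cast hr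
  intro p hrp hp
  refine pNorm_le_pNorm_of_sum_rpow_le hy (hr0.trans_le hrp) ?_
  exact sum_rpow_le_on_Icc hr0 (by linarith)
    (fun q hq => sum_rpow_le_of_sum_phiFun_le hx hy h hq.1 hq.2) p ⟨hrp, hp⟩

theorem stmt_11 (n : ℕ) (hn : 1 ≤ n) (x y : Fin n → ℝ)
    (hx : ∀ i, 0 ≤ x i) (hy : ∀ i, 0 ≤ y i) (r : ℕ) (hr : 1 ≤ r)
    (h : ∀ t : ℝ, 0 < t → ∑ i, phiFun r (y i * t) ≤ ∑ i, phiFun r (x i * t)) :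
    ∀ p : ℝ, (r : ℝ) ≤ p → p ≤ 2 * r → pNorm p y ≤ pNorm p x :=
  stmt_11_general n x y hx hy r hr h
end
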